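/- Let a, b, c, ε be real constants, p a positive even integer, and N a real number. On the open set U = { x ∈ ℝ⁴ : a x₁ᵖ + b x₂ᵖ + c x₃ᵖ + ε x₄ᵖ > 0 } define λ(x) = (a x₁ᵖ + b x₂ᵖ + c x₃ᵖ + ε x₄ᵖ)^{N/p}, and let M(x) be the 4×4 Jacobian matrix of x ↦ x/λ(x). Then the four similarity invariants of M(x) (the coefficients of its characteristic polynomial γ⁴ − Mγ³ + Gγ² − Aγ + K) are: Mean curvature M = trace M(x) = (4 − N)/λ(x); Gauss curvature G = (6 − 3N)/λ(x)² (the sum of the principal 2×2 minors); Cubic curvature A = (4 − 3N)/λ(x)³ (the sum of the principal 3×3 minors); Quartic curvature K = det M(x) = (1 − N)/λ(x)⁴. In particular, these invariants are independent of the anisotropy constants a, b, c, ε and of the exponent p, and the Mean curvature vanishes exactly when N = 4. -/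

import Mathlib

/-!
Write `y / λ(y) = μ(y) • y` with `μ = λ⁻¹`. By the product rule the Jacobian at `x` is
`μ(x) I + ∇μ(x) xᵀ`, a rank-one perturbation of a scalar matrix, so its characteristic
polynomial is `(γ - μ)ⁿ - (∇μ · x) (γ - μ)ⁿ⁻¹`. As `μ` is positively homogeneous of degree `-N`,
Euler's identity gives `∇μ · x = -N μ`; hence the characteristic polynomial is
`(γ - μ)ⁿ⁻¹ (γ - μ + N μ)`, which depends neither on the weights nor on `p`.
-/

open Matrix

namespace Matrix

variable {n R : Type*} [Fintype n] [DecidableEq n] [CommRing R]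

theorem det_smul_one_sub_vecMulVec (t : R) (u v : n → R) :
    det (t • 1 - vecMulVec u v) = t ^ Fintype.card n - (u ⬝ᵥ v) * t ^ (Fintype.card n - 1) := by
  have := eval_charpoly (vecMulVec u v) t
  rw [charpoly_vecMulVec] at this
  simpa [smul_one_eq_diagonal] using this.symm

end Matrix

theorem fderiv_apply_self_of_homogeneous {E : Type*} [NormedAddCommGroup E] [NormedSpace ℝ E]
    {f : E → ℝ} {x : E} {k : ℝ} (hd : DifferentiableAt ℝ f x)
    (hf : ∀ t : ℝ, 0 < t → f (t • x) = t ^ k * f x) :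
    fderiv ℝ f x x = k * f x := by
  have hray : HasDerivAt (fun t : ℝ => f (t • x)) (fderiv ℝ f x x) 1 := by
    have hd' : DifferentiableAt ℝ f ((1 : ℝ) • x) := by rwa [one_smul]
    have := hd'.hasFDerivAt.comp_hasDerivAt (1 : ℝ) ((hasDerivAt_id (1 : ℝ)).smul_const x)
    simp only [one_smul] at this
    exact this
  have hpow : HasDerivAt (fun t : ℝ => t ^ k * f x) (k * f x) 1 := by
    simpa using (Real.hasDerivAt_rpow_const (x := 1) (p := k) (Or.inl one_ne_zero)).mul_const (f x)
  refine hray.unique (hpow.congr_of_eventuallyEq ?_)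
  filter_upwards [Ioi_mem_nhds one_pos] with t ht using hf t ht

theorem ContinuousLinearMap.dotProduct_apply_single {ι : Type*} [Fintype ι] [DecidableEq ι]
    (L : (ι → ℝ) →L[ℝ] ℝ) (x : ι → ℝ) : (fun i => L (Pi.single i 1)) ⬝ᵥ x = L x := by
  conv_rhs => rw [pi_eq_sum_univ' x, map_sum]
  simp [dotProduct, mul_comm]

theorem of_fderiv_coord_mul_apply_single {ι : Type*} [Fintype ι] [DecidableEq ι]
    {μ : (ι → ℝ) → ℝ} {x : ι → ℝ} (hμ : DifferentiableAt ℝ μ x) :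
    Matrix.of (fun i j => fderiv ℝ (fun y => y j * μ y) x (Pi.single i 1)) =
      μ x • 1 + vecMulVec (fun i => fderiv ℝ μ x (Pi.single i 1)) x := by
  ext i j
  rw [of_apply, fderiv_fun_mul (by fun_prop) hμ, (hasFDerivAt_apply j x).fderiv]
  simp [Matrix.one_apply, vecMulVec_apply, Pi.single_apply, eq_comm (a := j), mul_comm, add_comm]

section Jacobian

variable {ι : Type*} [Fintype ι] [DecidableEq ι] {lam : (ι → ℝ) → ℝ} {x : ι → ℝ} {N : ℝ}

theorem jacobian_div_eq_of_homogeneous (hd : DifferentiableAt ℝ lam x) (hne : lam x ≠ 0)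
    (hhom : ∀ t : ℝ, 0 < t → lam (t • x) = t ^ N * lam x) :
    ∃ g : ι → ℝ, g ⬝ᵥ x = -N * (lam x)⁻¹ ∧
      Matrix.of (fun i j => fderiv ℝ (fun y => y j / lam y) x (Pi.single i 1)) =
        (lam x)⁻¹ • 1 + vecMulVec g x := by
  have hd' : DifferentiableAt ℝ (fun y => (lam y)⁻¹) x := hd.inv hne
  refine ⟨_, ?_, of_fderiv_coord_mul_apply_single hd'⟩
  rw [ContinuousLinearMap.dotProduct_apply_single]
  refine fderiv_apply_self_of_homogeneous hd' fun t ht => ?_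
  rw [hhom t ht, mul_inv, Real.rpow_neg ht.le]

theorem trace_jacobian_div_of_homogeneous (hd : DifferentiableAt ℝ lam x) (hne : lam x ≠ 0)
    (hhom : ∀ t : ℝ, 0 < t → lam (t • x) = t ^ N * lam x) :
    (Matrix.of (fun i j => fderiv ℝ (fun y => y j / lam y) x (Pi.single i 1))).trace =
      (Fintype.card ι - N) / lam x := by
  obtain ⟨g, hg, hJ⟩ := jacobian_div_eq_of_homogeneous hd hne hhom
  rw [hJ, trace_add, trace_smul, trace_one, trace_vecMulVec, hg]
  simp only [smul_eq_mul]
  field_simp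
  ring

theorem det_smul_one_sub_jacobian_div_of_homogeneous (hd : DifferentiableAt ℝ lam x)
    (hne : lam x ≠ 0) (hhom : ∀ t : ℝ, 0 < t → lam (t • x) = t ^ N * lam x) (γ : ℝ) :
    (γ • 1 - Matrix.of (fun i j => fderiv ℝ (fun y => y j / lam y) x (Pi.single i 1))).det =
      (γ - (lam x)⁻¹) ^ Fintype.card ι +
        N * (lam x)⁻¹ * (γ - (lam x)⁻¹) ^ (Fintype.card ι - 1) := by
  obtain ⟨g, hg, hJ⟩ := jacobian_div_eq_of_homogeneous hd hne hhom
  have hshift : γ • (1 : Matrix ι ι ℝ) - ((lam x)⁻¹ • 1 + vecMulVec g x) =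
      (γ - (lam x)⁻¹) • 1 - vecMulVec g x := by
    rw [sub_smul]; abel
  rw [hJ, hshift, det_smul_one_sub_vecMulVec, hg]
  ring

end Jacobian

section Holder

variable {ι : Type*} [Fintype ι] (w : ι → ℝ) (p : ℕ) (N : ℝ)

noncomputable def holderNorm (y : ι → ℝ) : ℝ := (∑ i, w i * y i ^ p) ^ (N / p)

variable {w p N}

theorem sum_mul_smul_pow (t : ℝ) (y : ι → ℝ) :
    ∑ i, w i * (t • y) i ^ p = t ^ p * ∑ i, w i * y i ^ p := by
  simp only [Pi.smul_apply, smul_eq_mul, mul_pow, Finset.mul_sum]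
  exact Finset.sum_congr rfl fun i _ => by ring

theorem holderNorm_smul (hp : p ≠ 0) {x : ι → ℝ} (hx : 0 ≤ ∑ i, w i * x i ^ p) {t : ℝ}
    (ht : 0 < t) : holderNorm w p N (t • x) = t ^ N * holderNorm w p N x := by
  rw [holderNorm, holderNorm, sum_mul_smul_pow, Real.mul_rpow (by positivity) hx,
    ← Real.rpow_natCast_mul ht.le, mul_div_cancel₀ _ (Nat.cast_ne_zero.mpr hp)]

theorem holderNorm_pos {x : ι → ℝ} (hx : 0 < ∑ i, w i * x i ^ p) : 0 < holderNorm w p N x :=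
  Real.rpow_pos_of_pos hx _

theorem differentiableAt_holderNorm {x : ι → ℝ} (hx : ∑ i, w i * x i ^ p ≠ 0) :
    DifferentiableAt ℝ (holderNorm w p N) x :=
  DifferentiableAt.rpow_const (by fun_prop) (Or.inl hx)

end Holder

theorem holder_jacobian_invariants_4D_general (a b c ε : ℝ)
    (p : ℕ) (hp : 0 < p) (N : ℝ)
    (lam : (Fin 4 → ℝ) → ℝ)
    (hlam : ∀ x : Fin 4 → ℝ,
      lam x = (a * x 0 ^ p + b * x 1 ^ p + c * x 2 ^ p + ε * x 3 ^ p) ^ (N / (p : ℝ)))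
    (M : (Fin 4 → ℝ) → Matrix (Fin 4) (Fin 4) ℝ)
    (hM : ∀ x i j, M x i j = fderiv ℝ (fun y => y j / lam y) x (Pi.single i 1)) :
    ∀ x : Fin 4 → ℝ, 0 < a * x 0 ^ p + b * x 1 ^ p + c * x 2 ^ p + ε * x 3 ^ p →
      (M x).trace = (4 - N) / lam x ∧
      (M x).det = (1 - N) / lam x ^ 4 ∧
      (∀ γ : ℝ,
        (γ • (1 : Matrix (Fin 4) (Fin 4) ℝ) - M x).det =
          γ ^ 4 - ((4 - N) / lam x) * γ ^ 3 + ((6 - 3 * N) / lam x ^ 2) * γ ^ 2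
            - ((4 - 3 * N) / lam x ^ 3) * γ + (1 - N) / lam x ^ 4) ∧
      ((M x).trace = 0 ↔ N = 4) := by
  intro x hx
  have hbase : 0 < ∑ i, ![a, b, c, ε] i * x i ^ p := by simpa [Fin.sum_univ_four] using hx
  obtain rfl : lam = holderNorm ![a, b, c, ε] p N :=
    funext fun y => by simp [hlam, holderNorm, Fin.sum_univ_four]
  have hMx : M x = Matrix.of fun i j => fderiv ℝ (fun y => y j / holderNorm ![a, b, c, ε] p N y) x
      (Pi.single i 1) := by
    ext i j; exact hM x i j
  have hlam0 := (holderNorm_pos (N := N) hbase).ne'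
  have hd := differentiableAt_holderNorm (N := N) hbase.ne'
  have hhom := fun t (ht : (0 : ℝ) < t) => holderNorm_smul (N := N) hp.ne' hbase.le ht
  have htrace := trace_jacobian_div_of_homogeneous hd hlam0 hhom
  have hchar := det_smul_one_sub_jacobian_div_of_homogeneous hd hlam0 hhom
  rw [← hMx] at htrace hchar
  simp only [Fintype.card_fin] at htrace hchar
  refine ⟨by rw [htrace]; norm_num, ?_, fun γ => ?_, ?_⟩
  · have h0 := hchar 0
    rw [zero_smul, zero_sub, det_neg, Fintype.card_fin] at h0
    simp only [div_eq_mul_inv, ← inv_pow]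
    linear_combination h0
  · rw [hchar]
    simp only [div_eq_mul_inv, ← inv_pow]
    ring
  · rw [htrace, div_eq_zero_iff, sub_eq_zero]
    simp [hlam0, eq_comm]

/-- For the 4D Hölder norm `λ(x) = (a x₁ᵖ + b x₂ᵖ + c x₃ᵖ + ε x₄ᵖ)^{N/p}`
and the Jacobian matrix `M(x)` of `x ↦ x/λ(x)`, the similarity invariants (coefficients
of the characteristic polynomial `γ⁴ − Mγ³ + Gγ² − Aγ + K`) are:
Mean curvature `M = trace M(x) = (4−N)/λ`, Gauss curvature `G = (6−3N)/λ²`,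
Cubic curvature `A = (4−3N)/λ³`, Quartic curvature `K = det M(x) = (1−N)/λ⁴`; they are
independent of `a, b, c, ε, p`, and the Mean curvature vanishes exactly when `N = 4`. -/
theorem holder_jacobian_invariants_4D (a b c ε : ℝ)
    (p : ℕ) (hp : 0 < p) (hpe : Even p) (N : ℝ)
    (lam : (Fin 4 → ℝ) → ℝ)
    (hlam : ∀ x : Fin 4 → ℝ,
      lam x = (a * x 0 ^ p + b * x 1 ^ p + c * x 2 ^ p + ε * x 3 ^ p) ^ (N / (p : ℝ)))
    (M : (Fin 4 → ℝ) → Matrix (Fin 4) (Fin 4) ℝ)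
    (hM : ∀ x i j, M x i j = fderiv ℝ (fun y => y j / lam y) x (Pi.single i 1)) :
    ∀ x : Fin 4 → ℝ, 0 < a * x 0 ^ p + b * x 1 ^ p + c * x 2 ^ p + ε * x 3 ^ p →
      (M x).trace = (4 - N) / lam x ∧
      (M x).det = (1 - N) / lam x ^ 4 ∧
      (∀ γ : ℝ,
        (γ • (1 : Matrix (Fin 4) (Fin 4) ℝ) - M x).det =
          γ ^ 4 - ((4 - N) / lam x) * γ ^ 3 + ((6 - 3 * N) / lam x ^ 2) * γ ^ 2
            - ((4 - 3 * N) / lam x ^ 3) * γ + (1 - N) / lam x ^ 4) ∧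
      ((M x).trace = 0 ↔ N = 4) :=
  holder_jacobian_invariants_4D_general a b c ε p hp N lam hlam M hM
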